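/- Let 0 < a < b with a ≤ b·e^{−1}. Then for the planar annulus B_b \ closure(B_a(0)), ‖∇ log|z|‖_{L^{2,1}} = 4√π ( log(b/a) + log(1 + √(1 − (a/b)²)) ), where the L^{2,1} norm is ‖g‖_{L^{2,1}(Ω)} = 4∫_0^∞ λ_g(t)^{1/2} dt with λ_g the distribution function on Ω. -/

import Mathlib

open MeasureTheory Metric Real

noncomputable section

abbrev E2 := EuclideanSpace ℝ (Fin 2)

lemma vol_ball2 (r : ℝ) (hr : 0 ≤ r) :
    volume (ball (0:E2) r) = ENNReal.ofReal (π * r^2) := by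
  rw [EuclideanSpace.volume_ball, ← ENNReal.ofReal_pow hr,
    show (Fintype.card (Fin 2)) = 2 by simp, ← ENNReal.ofReal_mul (by positivity)]
  congr 1
  rw [show ((2:ℕ):ℝ)/2 + 1 = 2 by norm_num, Real.Gamma_two, Real.sq_sqrt pi_pos.le]
  ring

lemma vol_cball2 (r : ℝ) (hr : 0 ≤ r) :
    volume (closedBall (0:E2) r) = ENNReal.ofReal (π * r^2) := by
  rw [Measure.addHaar_closedBall_eq_addHaar_ball, vol_ball2 r hr]

lemma vol_ann (a r : ℝ) (ha : 0 ≤ a) (h : a ≤ r) :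
    (volume (ball (0:E2) r \ closedBall 0 a)).toReal = π * r^2 - π * a^2 := by
  rcases eq_or_lt_of_le h with rfl | hlt
  · rw [Set.diff_eq_empty.mpr ball_subset_closedBall]
    simp
  · rw [measure_diff (closedBall_subset_ball hlt) measurableSet_closedBall.nullMeasurableSet
      (by rw [vol_cball2 a ha]; exact ENNReal.ofReal_ne_top),
      vol_ball2 r (ha.trans h), vol_cball2 a ha,
      ← ENNReal.ofReal_sub _ (by positivity), ENNReal.toReal_ofReal]
    nlinarith [mul_le_mul_of_nonneg_left (by nlinarith : a^2 ≤ r^2) pi_pos.le]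

lemma hasDerivF (a t : ℝ) (ha : 0 < a) (ht : 0 < t) (hta : t < 1/a) :
    HasDerivAt (fun t : ℝ => √π * (t * √(t⁻¹^2 - a^2) - Real.log (t⁻¹ + √(t⁻¹^2 - a^2))))
      (√π * √(t⁻¹^2 - a^2)) t := by
  have hti : a < t⁻¹ := by
    rw [one_div] at hta
    exact (lt_inv_comm₀ ht (by positivity)).mp (by simpa using hta)
  have hw : 0 < t⁻¹^2 - a^2 := by nlinarith
  have hspos : 0 < √(t⁻¹^2 - a^2) := Real.sqrt_pos.mpr hw
  have hinv : HasDerivAt (fun t : ℝ => t⁻¹) (-(t^2)⁻¹) t := hasDerivAt_inv ht.ne'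
  have hw' : HasDerivAt (fun t : ℝ => t⁻¹^2 - a^2) ((2:ℕ) * t⁻¹^1 * (-(t^2)⁻¹)) t :=
    (hinv.pow 2).sub_const _
  have hsq : HasDerivAt (fun t : ℝ => √(t⁻¹^2 - a^2))
      (((2:ℕ) * t⁻¹^1 * (-(t^2)⁻¹)) / (2 * √(t⁻¹^2 - a^2))) t := hw'.sqrt hw.ne'
  have hmul : HasDerivAt (fun t : ℝ => t * √(t⁻¹^2 - a^2))
      (1 * √(t⁻¹^2 - a^2) + t * (((2:ℕ) * t⁻¹^1 * (-(t^2)⁻¹)) / (2 * √(t⁻¹^2 - a^2)))) t :=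
    (hasDerivAt_id t).mul hsq
  have hargpos : 0 < t⁻¹ + √(t⁻¹^2 - a^2) := by positivity
  have hlog : HasDerivAt (fun t : ℝ => Real.log (t⁻¹ + √(t⁻¹^2 - a^2)))
      ((-(t^2)⁻¹ + ((2:ℕ) * t⁻¹^1 * (-(t^2)⁻¹)) / (2 * √(t⁻¹^2 - a^2))) / (t⁻¹ + √(t⁻¹^2 - a^2)))
      t := (hinv.add hsq).log hargpos.ne'
  have := (hmul.sub hlog).const_mul (√π)
  refine this.congr_deriv ?_
  have h1 : t ≠ 0 := ht.ne'
  set s := √(t⁻¹^2 - a^2) with hs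
  field_simp
  ring_nf

/-- The `L^{2,1}` norm of `∇ log|z| = x/|x|²` on the annulus `B_b \ closure (B_a 0)`:
`4 ∫_0^∞ λ(t)^{1/2} dt = 4√π (log(b/a) + log(1 + √(1 − (a/b)²)))`,
where `λ(t)` is the distribution function of `x ↦ 1/|x|` on the annulus. -/
theorem stmt18 (a b : ℝ) (ha : 0 < a) (hab : a ≤ b * Real.exp (-1)) :
    (4 * ∫ t in Set.Ioi (0 : ℝ),
        Real.sqrt ((volume {x : E2 |
          x ∈ ball (0 : E2) b \ closedBall 0 a ∧ t < 1 / ‖x‖}).toReal)) =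
      4 * Real.sqrt π *
        (Real.log (b / a) + Real.log (1 + Real.sqrt (1 - (a / b) ^ 2))) := by
  have hb : 0 < b := by
    by_contra h
    push_neg at h
    nlinarith [Real.exp_pos (-1 : ℝ)]
  have hab' : a < b := by
    nlinarith [Real.exp_pos (-1:ℝ), Real.exp_lt_one_iff.mpr (by norm_num : (-1:ℝ) < 0)]
  have hba : 1/b < 1/a := by
    rw [div_lt_div_iff₀ hb ha]; nlinarith
  have h0b : (0:ℝ) < 1/b := by positivity
  have h0a : (0:ℝ) < 1/a := by positivity
  -- pointwise formula
  have hpt : ∀ t ∈ Set.Ioi (0:ℝ),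
      Real.sqrt ((volume {x : E2 |
          x ∈ ball (0 : E2) b \ closedBall 0 a ∧ t < 1 / ‖x‖}).toReal)
        = Real.sqrt (π * (min b (1/t))^2 - π * a^2) := by
    intro t ht
    have ht : (0:ℝ) < t := ht
    have hmin : 0 < min b (1/t) := lt_min hb (by positivity)
    have hset : {x : E2 | x ∈ ball (0 : E2) b \ closedBall 0 a ∧ t < 1 / ‖x‖}
        = ball (0:E2) (min b (1/t)) \ closedBall 0 a := by
      ext x
      simp only [Set.mem_setOf_eq, Set.mem_diff, mem_ball_zero_iff, mem_closedBall_zero_iff,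
        lt_min_iff, not_le]
      constructor
      · rintro ⟨⟨hxb, hxa⟩, htx⟩
        have hx0 : 0 < ‖x‖ := ha.trans hxa
        refine ⟨⟨hxb, ?_⟩, hxa⟩
        rw [lt_div_iff₀ ht, mul_comm, ← lt_div_iff₀ hx0]
        exact htx
      · rintro ⟨⟨hxb, hxt⟩, hxa⟩
        have hx0 : 0 < ‖x‖ := ha.trans hxa
        refine ⟨⟨hxb, hxa⟩, ?_⟩
        rw [lt_div_iff₀ hx0, mul_comm, ← lt_div_iff₀ ht]
        exact hxt
    rw [hset]
    rcases le_or_gt a (min b (1/t)) with hc | hc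
    · rw [vol_ann a _ ha.le hc]
    · have : ball (0:E2) (min b (1/t)) \ closedBall 0 a = ∅ :=
        Set.diff_eq_empty.mpr (ball_subset_closedBall.trans
          (closedBall_subset_closedBall hc.le))
      rw [this]
      simp only [measure_empty, ENNReal.toReal_zero, Real.sqrt_zero]
      symm
      rw [Real.sqrt_eq_zero']
      nlinarith [mul_lt_mul_of_pos_left (by nlinarith : (min b (1/t))^2 < a^2) pi_pos]
  rw [setIntegral_congr_fun measurableSet_Ioi hpt]
  set h : ℝ → ℝ := fun t => √(π * (min b (1/t))^2 - π * a^2) with hh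
  have hval1 : ∀ t ∈ Set.Ioc (0:ℝ) (1/b), h t = √π * √(b^2 - a^2) := by
    intro t ht
    have hmin : min b (1/t) = b := by
      apply min_eq_left
      rw [le_div_iff₀ ht.1]
      nlinarith [mul_le_mul_of_nonneg_left ht.2 hb.le, mul_one_div_cancel hb.ne']
    rw [hh]
    simp only [hmin]
    rw [show π * b^2 - π*a^2 = π * (b^2 - a^2) by ring, Real.sqrt_mul pi_pos.le]
  have hval2 : ∀ t ∈ Set.Ioc (1/b) (1/a), h t = √π * √(t⁻¹^2 - a^2) := by
    intro t ht
    have ht0 : 0 < t := h0b.trans ht.1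
    have hmin : min b (1/t) = 1/t := by
      apply min_eq_right
      rw [div_le_iff₀ ht0]
      nlinarith [(div_lt_iff₀ hb).mp ht.1]
    rw [hh]
    simp only [hmin]
    rw [show π * (1/t)^2 - π*a^2 = π * (t⁻¹^2 - a^2) by rw [one_div]; ring, Real.sqrt_mul pi_pos.le]
  have hval3 : ∀ t ∈ Set.Ioi (1/a), h t = 0 := by
    intro t ht
    have ht0 : 0 < t := h0a.trans ht
    have h1t : 1/t < a := by
      rw [div_lt_iff₀ ht0]
      nlinarith [(div_lt_iff₀ ha).mp (Set.mem_Ioi.mp ht)]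
    have hmlt : min b (1/t) < a := (min_le_right _ _).trans_lt h1t
    have hm0 : 0 < min b (1/t) := lt_min hb (by positivity)
    rw [hh]
    simp only
    rw [Real.sqrt_eq_zero']
    nlinarith [mul_lt_mul_of_pos_left (by nlinarith : (min b (1/t))^2 < a^2) pi_pos]
  have hcont2 : ContinuousOn (fun t : ℝ => √π * √(t⁻¹^2 - a^2)) (Set.Icc (1/b) (1/a)) := by
    apply ContinuousOn.mul continuousOn_const
    apply Real.continuous_sqrt.comp_continuousOn
    exact ((continuousOn_id.inv₀ fun t ht => (h0b.trans_le ht.1).ne').pow 2).sub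
      continuousOn_const
  have hint1 : IntegrableOn h (Set.Ioc (0:ℝ) (1/b)) :=
    (integrableOn_const measure_Ioc_lt_top.ne).congr_fun
      (fun t ht => (hval1 t ht).symm) measurableSet_Ioc
  have hint2 : IntegrableOn h (Set.Ioc (1/b) (1/a)) :=
    (hcont2.integrableOn_Icc.mono_set Set.Ioc_subset_Icc_self).congr_fun
      (fun t ht => (hval2 t ht).symm) measurableSet_Ioc
  have hint3 : IntegrableOn h (Set.Ioi (1/a)) :=
    (integrableOn_zero).congr_fun (fun t ht => (hval3 t ht).symm) measurableSet_Ioi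
  have hsplit1 : Set.Ioc (0:ℝ) (1/a) ∪ Set.Ioi (1/a) = Set.Ioi 0 :=
    Set.Ioc_union_Ioi_eq_Ioi h0a.le
  have hsplit2 : Set.Ioc (0:ℝ) (1/b) ∪ Set.Ioc (1/b) (1/a) = Set.Ioc 0 (1/a) :=
    Set.Ioc_union_Ioc_eq_Ioc h0b.le hba.le
  rw [← hsplit1, setIntegral_union (Set.Ioc_disjoint_Ioi le_rfl) measurableSet_Ioi
      (by rw [← hsplit2]; exact hint1.union hint2) hint3,
    ← hsplit2, setIntegral_union (Set.Ioc_disjoint_Ioc.mpr (le_trans (min_le_left _ _) (le_max_right _ _))) measurableSet_Ioc hint1 hint2]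
  have hI3 : ∫ t in Set.Ioi (1/a), h t = 0 := by
    rw [setIntegral_congr_fun measurableSet_Ioi hval3]
    simp
  have hI1 : ∫ t in Set.Ioc (0:ℝ) (1/b), h t = (1/b) * (√π * √(b^2 - a^2)) := by
    rw [setIntegral_congr_fun measurableSet_Ioc hval1, setIntegral_const, Real.volume_real_Ioc,
      smul_eq_mul, sub_zero, max_eq_left h0b.le]
  set F : ℝ → ℝ := fun t => √π * (t * √(t⁻¹^2 - a^2) - Real.log (t⁻¹ + √(t⁻¹^2 - a^2))) with hF
  have hI2 : ∫ t in Set.Ioc (1/b) (1/a), h t = F (1/a) - F (1/b) := by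
    rw [setIntegral_congr_fun measurableSet_Ioc hval2, ← intervalIntegral.integral_of_le hba.le]
    apply intervalIntegral.integral_eq_sub_of_hasDeriv_right_of_le hba.le
    · -- continuity of F on Icc
      apply ContinuousOn.mul continuousOn_const
      have hinv : ContinuousOn (fun t : ℝ => t⁻¹) (Set.Icc (1/b) (1/a)) :=
        continuousOn_id.inv₀ fun t ht => (h0b.trans_le ht.1).ne'
      have hsq : ContinuousOn (fun t : ℝ => √(t⁻¹^2 - a^2)) (Set.Icc (1/b) (1/a)) :=
        Real.continuous_sqrt.comp_continuousOn ((hinv.pow 2).sub continuousOn_const)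
      exact (continuousOn_id.mul hsq).sub ((hinv.add hsq).log fun t ht => by
        have : 0 < t⁻¹ := inv_pos.mpr (h0b.trans_le ht.1)
        exact (add_pos_of_pos_of_nonneg this (Real.sqrt_nonneg _)).ne')
    · intro t ht
      exact (hasDerivF a t ha (h0b.trans ht.1) ht.2).hasDerivWithinAt
    · exact (by rw [Set.uIcc_of_le hba.le]; exact hcont2 :
        ContinuousOn (fun t : ℝ => √π * √(t⁻¹^2 - a^2)) (Set.uIcc (1/b) (1/a))).intervalIntegrable
  rw [hI1, hI2, hI3]
  have e1 : ((1/a : ℝ))⁻¹ = a := by rw [one_div, inv_inv]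
  have e2 : ((1/b : ℝ))⁻¹ = b := by rw [one_div, inv_inv]
  rw [hF]
  simp only [e1, e2, show a^2 - a^2 = (0:ℝ) by ring, Real.sqrt_zero]
  have hsq : √(1 - (a/b)^2) = √(b^2 - a^2) / b := by
    rw [show 1 - (a/b)^2 = (b^2 - a^2)/b^2 by field_simp,
      Real.sqrt_div (by nlinarith) _, Real.sqrt_sq hb.le]
  have hs0 : (0:ℝ) ≤ √(b^2 - a^2) := Real.sqrt_nonneg _
  have hpos : (0:ℝ) < b + √(b^2 - a^2) := by positivity
  rw [hsq, Real.log_div hb.ne' ha.ne',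
    show 1 + √(b^2-a^2)/b = (b + √(b^2-a^2))/b by field_simp,
    Real.log_div hpos.ne' hb.ne']
  ring
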